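/- Gating feed-forward network lemma: Let d_embd = 5, let l ≥ 2 be an integer, let 1 ≤ k ≤ l, and let M > 0. For 1 ≤ t ≤ l define the interaction vector I_t = (cos(t·pi/(2l)), sin(t·pi/(2l))) in R^2. There exists a two-layer ReLU feed-forward network FFN : R^5 → R^5 of constant width, whose weight parameters are bounded in absolute value by C·l·M for an absolute constant C, such that for every matrix H in R^{5×l} with ||H||_∞ ≤ M whose t-th column h_t satisfies (h_t^3, h_t^4) = I_t and h_t^5 = 1 for all t, one has FFN(h_t) = h_t for all t ≤ k, and FFN(h_t) = (0, 0, I_t^1, I_t^2, 1)^T for all t > k. -/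

import Mathlib

open Matrix Finset Real

noncomputable section

def relu (t : ℝ) : ℝ := max 0 t

/-!
Each coordinate `a` of the token is carried by a pair of hidden units `relu (± h a + γ a)`,
whose difference is `2 * h a` when `γ a ≥ |h a|` and `0` when `γ a ≤ -|h a|`. On the
(0-indexed) rows `2, 3, 4` the offset is the constant `γ a = M`. On the data rows `0, 1` it is
`γ a = 4 l M ⟪q, h⟫ - M`, where the query `q = (sin α, -cos α)` is read against the
interaction vector `I_t = (cos θ_t, sin θ_t)` and `α` is the phase halfway between tokens `k`
and `k + 1`. Then `⟪q, I_t⟫ = sin (α - θ_t)` is at least `1 / (2 l)` for `t ≤ k` by Jordan's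
inequality and nonpositive for `t > k`, so the gate is open exactly on the first `k` tokens.
For `M < 1` no token satisfies `|h 4| ≤ M` and the zero network works.
-/

lemma relu_of_nonneg {t : ℝ} (ht : 0 ≤ t) : relu t = t := max_eq_right ht

lemma relu_of_nonpos {t : ℝ} (ht : t ≤ 0) : relu t = 0 := max_eq_left ht

lemma relu_add_sub_relu_neg_add_of_abs_le {x γ : ℝ} (h : |x| ≤ γ) :
    relu (x + γ) - relu (-x + γ) = 2 * x := by
  obtain ⟨h₁, h₂⟩ := abs_le.1 h
  rw [relu_of_nonneg (by linarith), relu_of_nonneg (by linarith)]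
  ring

lemma relu_add_sub_relu_neg_add_of_abs_le_neg {x γ : ℝ} (h : |x| ≤ -γ) :
    relu (x + γ) - relu (-x + γ) = 0 := by
  obtain ⟨h₁, h₂⟩ := abs_le.1 h
  rw [relu_of_nonpos (by linarith), relu_of_nonpos (by linarith), sub_zero]

section Pair

variable {n : Type*} [DecidableEq n]

def pairW₁ (G : Matrix n n ℝ) : Matrix (n ⊕ n) n ℝ := fromRows (1 + G) (-1 + G)

variable (n) in
def pairW₂ : Matrix n (n ⊕ n) ℝ := fromCols ((2 : ℝ)⁻¹ • 1) (-(2 : ℝ)⁻¹ • 1)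

lemma abs_pairW₁_le {G : Matrix n n ℝ} {B : ℝ} (hG : ∀ a c, |G a c| ≤ B) (i : n ⊕ n) (c : n) :
    |pairW₁ G i c| ≤ 1 + B := by
  have hone : ∀ a : n, |(1 : Matrix n n ℝ) a c| ≤ 1 := fun a => by
    rw [one_apply]; split_ifs <;> simp
  rcases i with a | a
  · exact (abs_add_le _ _).trans (add_le_add (hone a) (hG a c))
  · refine (abs_add_le _ _).trans (add_le_add ?_ (hG a c))
    simpa using hone a

lemma abs_pairW₂_le (i : n) (j : n ⊕ n) : |pairW₂ n i j| ≤ 2⁻¹ := by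
  rcases j with c | c <;> simp [pairW₂, one_apply] <;> split_ifs <;> norm_num

end Pair

section FFN

variable {m n ι κ : Type*} [Fintype n] [Fintype ι] [Fintype κ]

def ffn (W₁ : Matrix ι n ℝ) (b₁ : ι → ℝ) (W₂ : Matrix m ι ℝ) (b₂ : m → ℝ) (h : n → ℝ) :
    m → ℝ :=
  W₂ *ᵥ (fun j => relu ((W₁ *ᵥ h) j + b₁ j)) + b₂

lemma ffn_submatrix (e : κ ≃ ι) (W₁ : Matrix ι n ℝ) (b₁ : ι → ℝ) (W₂ : Matrix m ι ℝ)
    (b₂ : m → ℝ) :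
    ffn (W₁.submatrix e id) (b₁ ∘ e) (W₂.submatrix id e) b₂ = ffn W₁ b₁ W₂ b₂ := by
  ext h a
  simp only [ffn, Pi.add_apply, mulVec, dotProduct, submatrix_apply, id, Function.comp_apply]
  rw [e.sum_comp (fun j => W₂ a j * relu ((∑ c, W₁ j c * h c) + b₁ j))]

variable [DecidableEq n]

lemma ffn_pair_apply (G : Matrix n n ℝ) (β h : n → ℝ) (a : n) :
    ffn (pairW₁ G) (Sum.elim β β) (pairW₂ n) 0 h a
      = (relu (h a + ((G *ᵥ h) a + β a)) - relu (-h a + ((G *ᵥ h) a + β a))) / 2 := by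
  simp only [ffn, pairW₁, pairW₂, Pi.add_apply, Pi.zero_apply, add_zero, fromCols_mulVec,
    fromRows_mulVec, smul_mulVec, one_mulVec, Function.comp_apply, Sum.elim_inl, Sum.elim_inr,
    add_mulVec, neg_mulVec, Pi.smul_apply, Pi.neg_apply, smul_eq_mul, add_assoc]
  ring

end FFN

def phase (l : ℕ) (s : ℝ) : ℝ := s * π / (2 * l)

lemma phase_sub_phase (l : ℕ) (s r : ℝ) : phase l s - phase l r = phase l (s - r) := by
  unfold phase; ring

lemma div_le_sin_phase {l : ℕ} {s : ℝ} (hl : 0 < l) (hs : 0 ≤ s) (hsl : s ≤ l) :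
    s / l ≤ sin (phase l s) := by
  have hl' : (0 : ℝ) < l := by exact_mod_cast hl
  have hphase : phase l s ≤ π / 2 := by
    rw [phase, div_le_div_iff₀ (by positivity) two_pos]
    nlinarith [pi_pos]
  calc s / l = 2 / π * phase l s := by unfold phase; field_simp
    _ ≤ sin (phase l s) := mul_le_sin (by unfold phase; positivity) hphase

lemma sin_phase_nonpos {l : ℕ} {s : ℝ} (hl : 0 < l) (hs : -(2 * l) ≤ s) (hs0 : s ≤ 0) :
    sin (phase l s) ≤ 0 := by
  have hl' : (0 : ℝ) < l := by exact_mod_cast hl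
  apply sin_nonpos_of_nonpos_of_neg_pi_le
  · exact div_nonpos_of_nonpos_of_nonneg (mul_nonpos_of_nonpos_of_nonneg hs0 pi_pos.le)
      (by positivity)
  · rw [phase, le_div_iff₀ (by positivity)]
    nlinarith [pi_pos]

/-- The query at the phase `k + 1/2`, halfway between the phases of tokens `k` and `k + 1`. -/
def gateVec (l k : ℕ) : Fin 5 → ℝ :=
  ![0, 0, sin (phase l (k + 1 / 2)), -cos (phase l (k + 1 / 2)), 0]

lemma gateVec_dotProduct (l k : ℕ) {h : Fin 5 → ℝ} {θ : ℝ} (h2 : h 2 = cos θ)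
    (h3 : h 3 = sin θ) : gateVec l k ⬝ᵥ h = sin (phase l (k + 1 / 2) - θ) := by
  rw [sin_sub, dotProduct, Fin.sum_univ_five, h2, h3]
  simp [gateVec]
  ring

lemma abs_gateVec_le_one (l k : ℕ) (c : Fin 5) : |gateVec l k c| ≤ 1 := by
  fin_cases c <;> simp [gateVec, abs_sin_le_one, abs_cos_le_one]

lemma one_div_le_sin_phase_sub {l k t : ℕ} (hkl : k ≤ l) (htk : t + 1 ≤ k) :
    1 / (2 * l) ≤ sin (phase l (k + 1 / 2) - phase l (t + 1)) := by
  have hl : 0 < l := by omega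
  have hl' : (0 : ℝ) < l := by exact_mod_cast hl
  have htk' : (t : ℝ) + 1 ≤ k := by exact_mod_cast htk
  have hkl' : (k : ℝ) ≤ l := by exact_mod_cast hkl
  rw [phase_sub_phase]
  refine le_trans ?_ (div_le_sin_phase hl (by linarith) (by linarith [t.cast_nonneg (α := ℝ)]))
  rw [div_mul_eq_div_div]
  exact div_le_div_of_nonneg_right (by linarith) hl'.le

lemma sin_phase_sub_nonpos {l k t : ℕ} (htl : t < l) (hkt : k < t + 1) :
    sin (phase l (k + 1 / 2) - phase l (t + 1)) ≤ 0 := by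
  have hkt' : (k : ℝ) + 1 ≤ t + 1 := by exact_mod_cast hkt
  have htl' : (t : ℝ) + 1 ≤ l := by exact_mod_cast htl
  rw [phase_sub_phase]
  exact sin_phase_nonpos (by omega) (by linarith [k.cast_nonneg (α := ℝ)]) (by linarith)

def gateMatrix (l k : ℕ) (A : ℝ) : Matrix (Fin 5) (Fin 5) ℝ :=
  of fun a => if (a : ℕ) < 2 then A • gateVec l k else 0

def gateBias (M : ℝ) : Fin 5 → ℝ := fun a => if (a : ℕ) < 2 then -M else M

lemma abs_gateMatrix_le (l k : ℕ) {A : ℝ} (hA : 0 ≤ A) (a c : Fin 5) :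
    |gateMatrix l k A a c| ≤ A := by
  simp only [gateMatrix, of_apply]
  split_ifs
  · rw [Pi.smul_apply, smul_eq_mul, abs_mul, abs_of_nonneg hA]
    exact mul_le_of_le_one_right hA (abs_gateVec_le_one l k c)
  · simpa using hA

lemma abs_gateBias_le {M : ℝ} (hM : 0 ≤ M) (a : Fin 5) : |gateBias M a| ≤ M := by
  unfold gateBias
  split_ifs <;> simp [abs_of_nonneg hM]

lemma gateMatrix_mulVec_add_gateBias (l k : ℕ) (A M : ℝ) (h : Fin 5 → ℝ) (a : Fin 5) :
    (gateMatrix l k A *ᵥ h) a + gateBias M a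
      = if (a : ℕ) < 2 then A * (gateVec l k ⬝ᵥ h) - M else M := by
  simp only [gateMatrix, gateBias, mulVec, of_apply]
  split_ifs
  · simp [dotProduct, Finset.mul_sum, mul_assoc, sub_eq_add_neg]
  · simp

lemma ffn_gating_apply {l k t : ℕ} (hkl : k ≤ l) (htl : t < l) {M : ℝ} {h : Fin 5 → ℝ}
    (hh : ∀ a, |h a| ≤ M) (h2 : h 2 = cos (phase l (t + 1)))
    (h3 : h 3 = sin (phase l (t + 1))) (a : Fin 5) :
    ffn (pairW₁ (gateMatrix l k (4 * l * M))) (Sum.elim (gateBias M) (gateBias M)) (pairW₂ _) 0 h a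
      = if t + 1 ≤ k ∨ 2 ≤ (a : ℕ) then h a else 0 := by
  have hM : 0 ≤ M := (abs_nonneg _).trans (hh a)
  have hl : (0 : ℝ) < l := by exact_mod_cast (by omega : 0 < l)
  rw [ffn_pair_apply, gateMatrix_mulVec_add_gateBias, gateVec_dotProduct l k h2 h3]
  by_cases ha : (a : ℕ) < 2
  · rw [if_pos ha]
    by_cases htk : t + 1 ≤ k
    · have hopen : 2 * M ≤ 4 * l * M * sin (phase l (k + 1 / 2) - phase l (t + 1)) :=
        calc 2 * M = 4 * l * M * (1 / (2 * l)) := by field_simp; ring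
          _ ≤ _ := mul_le_mul_of_nonneg_left (one_div_le_sin_phase_sub hkl htk) (by positivity)
      rw [relu_add_sub_relu_neg_add_of_abs_le (by linarith [hh a]), if_pos (Or.inl htk)]
      ring
    · have hclosed : 4 * l * M * sin (phase l (k + 1 / 2) - phase l (t + 1)) ≤ 0 :=
        mul_nonpos_of_nonneg_of_nonpos (by positivity) (sin_phase_sub_nonpos htl (by omega))
      rw [relu_add_sub_relu_neg_add_of_abs_le_neg (by linarith [hh a]), if_neg (by omega)]
      ring
  · rw [if_neg ha, relu_add_sub_relu_neg_add_of_abs_le (hh a), if_pos (Or.inr (by omega))]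
    ring

theorem gating_ffn :
    ∃ C : ℝ, 0 < C ∧ ∃ w : ℕ, 0 < w ∧
      ∀ (l : ℕ), 2 ≤ l → ∀ k : ℕ, 1 ≤ k → k ≤ l → ∀ M : ℝ, 0 < M →
        ∃ (W₁ : Matrix (Fin w) (Fin 5) ℝ) (W₂ : Matrix (Fin 5) (Fin w) ℝ)
          (b₁ : Fin w → ℝ) (b₂ : Fin 5 → ℝ),
          (∀ a b, |W₁ a b| ≤ C * l * M) ∧ (∀ a b, |W₂ a b| ≤ C * l * M) ∧
          (∀ a, |b₁ a| ≤ C * l * M) ∧ (∀ a, |b₂ a| ≤ C * l * M) ∧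
          ∀ H : Matrix (Fin 5) (Fin l) ℝ,
            (∀ a t, |H a t| ≤ M) →
            (∀ t : Fin l,
              H 2 t = Real.cos (((t : ℕ) + 1) * Real.pi / (2 * l)) ∧
              H 3 t = Real.sin (((t : ℕ) + 1) * Real.pi / (2 * l)) ∧
              H 4 t = 1) →
            ∀ t : Fin l,
              ((t : ℕ) + 1 ≤ k → ∀ a : Fin 5,
                W₂.mulVec (fun j => relu (W₁.mulVec (fun c => H c t) j + b₁ j)) a + b₂ a
               = H a t) ∧
              (k < (t : ℕ) + 1 → ∀ a : Fin 5,
                W₂.mulVec (fun j => relu (W₁.mulVec (fun c => H c t) j + b₁ j)) a + b₂ a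
               = if 2 ≤ (a : ℕ) then H a t else 0) := by
  refine ⟨5, by norm_num, 5 + 5, by norm_num, fun l hl k _ hkl M hM => ?_⟩
  have hlM : 0 ≤ 5 * l * M := by positivity
  rcases lt_or_ge M 1 with hM1 | hM1
  · refine ⟨0, 0, 0, 0, by simpa, by simpa, by simpa, by simpa, fun H hH hI t => ?_⟩
    have := hH 4 t
    rw [(hI t).2.2, abs_one] at this
    exact absurd this (not_le.2 hM1)
  have hl1 : (1 : ℝ) ≤ l := by exact_mod_cast (by omega : 1 ≤ l)
  have h1 : 1 ≤ l * M := one_le_mul_of_one_le_of_one_le hl1 hM1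
  let e : Fin (5 + 5) ≃ Fin 5 ⊕ Fin 5 := finSumFinEquiv.symm
  refine ⟨(pairW₁ (gateMatrix l k (4 * l * M))).submatrix e id, (pairW₂ _).submatrix id e,
    Sum.elim (gateBias M) (gateBias M) ∘ e, 0, fun i c => ?_, fun a j => ?_, fun i => ?_,
    by simpa, fun H hH hI t => ?_⟩
  · refine (abs_pairW₁_le (abs_gateMatrix_le l k (by positivity)) _ c).trans ?_
    linarith
  · exact (abs_pairW₂_le a _).trans (by linarith)
  · change |Sum.elim (gateBias M) (gateBias M) (e i)| ≤ _
    rcases e i with a | a <;> exact (abs_gateBias_le hM.le a).trans (by nlinarith)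
  · obtain ⟨h2, h3, -⟩ := hI t
    have hgate := ffn_gating_apply hkl t.isLt (fun c => hH c t) h2 h3
    rw [← ffn_submatrix e] at hgate
    exact ⟨fun htk a => (hgate a).trans (if_pos (Or.inl htk)),
      fun hkt a => (hgate a).trans (by simp [not_le.2 hkt])⟩

end
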